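/- Let n ≥ 4 with n ≡ 1 (mod 3). Partition {1,...,n} into a set S₀ of 4 vertices and (n-4)/3 sets S₁,...,S_{(n-4)/3} of 3 vertices each, and let G_n be the graph in which any two vertices in different parts are adjacent and, within S₀, the four vertices form a 4-cycle (and each Sᵢ, i ≥ 1, is independent). Then G_n has exactly 4·3^{(n-4)/3} maximal cliques. -/

import Mathlib

open SimpleGraph

/-- `s` is a maximal clique of the simple graph `G`. -/
def MaxClique {V : Type*} (G : SimpleGraph V) (s : Set V) : Prop :=
  G.IsClique s ∧ ∀ t : Set V, G.IsClique t → s ⊆ t → s = t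

/-- The graph obtained from `G` by adding the edge `(u,v)`. -/
def addEdge {V : Type*} (G : SimpleGraph V) (u v : V) : SimpleGraph V :=
  G ⊔ SimpleGraph.fromEdgeSet {s(u, v)}

/-- The graph obtained from `G` by adding the set of edges `H`. -/
def addEdges {V : Type*} (G : SimpleGraph V) (H : Set (Sym2 V)) : SimpleGraph V :=
  G ⊔ SimpleGraph.fromEdgeSet H

/-- The number of maximal cliques of `G`. -/
noncomputable def numMaxCliques {V : Type*} (G : SimpleGraph V) : ℕ :=
  Nat.card {s : Set V // MaxClique G s}

/-- `f k`: the maximum possible number of maximal cliques in a graph on `k` vertices. -/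
noncomputable def maxNumMaxCliques (k : ℕ) : ℕ :=
  sSup {m | ∃ G : SimpleGraph (Fin k), m = numMaxCliques G}

/-- Index of the part containing vertex `i`: part 0 is `{0,1,2,3}`, then triples. -/
def part (n : ℕ) (i : Fin n) : ℕ := if (i : ℕ) < 4 then 0 else ((i : ℕ) - 4) / 3 + 1

/-- Adjacency in a 4-cycle on `{0,1,2,3}`. -/
def cyc4 (a b : ℕ) : Prop := (a + 1) % 4 = b % 4 ∨ (b + 1) % 4 = a % 4

/-- The complete multipartite graph with parts `S₀` of size 4 and triples,
    together with a 4-cycle added inside `S₀`. -/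
def Gmm (n : ℕ) : SimpleGraph (Fin n) where
  Adj i j := i ≠ j ∧ (part n i ≠ part n j ∨ ((i : ℕ) < 4 ∧ (j : ℕ) < 4 ∧ cyc4 i j))
  symm := by
    constructor
    intro i j ⟨h1, h2⟩
    refine ⟨h1.symm, ?_⟩
    rcases h2 with h | ⟨hi, hj, hc⟩
    · exact Or.inl h.symm
    · exact Or.inr ⟨hj, hi, hc.symm⟩
  loopless := by constructor; intro i h; exact h.1 rfl

/-- The complete multipartite graph `H_n` with one part of size 4 and triples. -/
def Hmm (n : ℕ) : SimpleGraph (Fin n) where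
  Adj i j := part n i ≠ part n j
  symm := by constructor; intro i j h; exact h.symm
  loopless := by constructor; intro i h; exact h rfl


/-!
`Gmm (3k+4)` is the join of a 4-cycle and `k` independent triples. In a join, every vertex of one
part is adjacent to every vertex of another, so a set is a maximal clique exactly when its trace on
each part is a maximal clique of that part: the number of maximal cliques is the product over the
parts. The 4-cycle is triangle-free without isolated vertices, so its maximal cliques are its
4 edges; an independent triple has its 3 singletons. Hence `4 * 3 ^ k`.
-/

open Set

variable {V W ι : Type*}

theorem maxClique_iff_maximal {G : SimpleGraph V} {s : Set V} :
    MaxClique G s ↔ Maximal G.IsClique s :=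
  maximal_iff.symm

theorem numMaxCliques_eq_card_maximal (G : SimpleGraph V) :
    numMaxCliques G = Nat.card {s // Maximal G.IsClique s} :=
  Nat.card_congr (Equiv.subtypeEquivRight fun _ => maxClique_iff_maximal)

theorem iUnion_inter_preimage_singleton {p : V → ι} {t : ι → Set V} (ht : ∀ i, t i ⊆ p ⁻¹' {i})
    (i : ι) :
    (⋃ j, t j) ∩ p ⁻¹' {i} = t i := by
  ext v
  refine ⟨fun ⟨hv, hvi⟩ => ?_, fun hv => ⟨mem_iUnion_of_mem i hv, ht i hv⟩⟩
  obtain ⟨j, hj⟩ := mem_iUnion.1 hv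
  have hji : j = i := (ht j hj).symm.trans hvi
  exact hji ▸ hj

namespace SimpleGraph

/-- `t` is a maximal clique of the induced subgraph `G[P]`, kept as a set of vertices of `G`. -/
def IsMaxCliqueIn (G : SimpleGraph V) (P t : Set V) : Prop :=
  Maximal (fun u => u ⊆ P ∧ G.IsClique u) t

section Join

variable {G : SimpleGraph V} {p : V → ι}

theorem isClique_of_forall_isClique_inter_fiber (hjoin : ∀ u v, p u ≠ p v → G.Adj u v)
    {s : Set V} (hs : ∀ i, G.IsClique (s ∩ p ⁻¹' {i})) : G.IsClique s := by
  intro u hu v hv huv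
  by_cases hp : p u = p v
  · exact hs (p v) ⟨hu, hp⟩ ⟨hv, rfl⟩ huv
  · exact hjoin u v hp

theorem maximal_isClique_iff_forall_fiber (hjoin : ∀ u v, p u ≠ p v → G.Adj u v) {s : Set V} :
    Maximal G.IsClique s ↔ ∀ i, G.IsMaxCliqueIn (p ⁻¹' {i}) (s ∩ p ⁻¹' {i}) := by
  constructor
  · intro hs i
    refine ⟨⟨inter_subset_right, hs.prop.subset inter_subset_left⟩, fun t ⟨htP, ht⟩ hst => ?_⟩
    have hunion : G.IsClique (s ∪ t) := by
      rintro u (hu | hu) v (hv | hv) huv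
      · exact hs.prop hu hv huv
      · by_cases hpu : p u = i
        · exact ht (hst ⟨hu, hpu⟩) hv huv
        · exact hjoin u v fun h => hpu (h.trans (htP hv))
      · by_cases hpv : p v = i
        · exact ht hu (hst ⟨hv, hpv⟩) huv
        · exact hjoin u v fun h => hpv (h.symm.trans (htP hu))
      · exact ht hu hv huv
    exact fun v hv => ⟨hs.2 hunion subset_union_left (subset_union_right hv), htP hv⟩
  · intro h
    refine ⟨isClique_of_forall_isClique_inter_fiber hjoin fun i => (h i).prop.2,
      fun t ht hst v hv => ?_⟩
    exact ((h (p v)).2 ⟨inter_subset_right, ht.subset inter_subset_left⟩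
      (inter_subset_inter_left _ hst) ⟨hv, rfl⟩).1

def maximalCliquesEquivPi (hjoin : ∀ u v, p u ≠ p v → G.Adj u v) :
    {s // Maximal G.IsClique s} ≃ ∀ i, {t // G.IsMaxCliqueIn (p ⁻¹' {i}) t} where
  toFun s i := ⟨s.1 ∩ p ⁻¹' {i}, (maximal_isClique_iff_forall_fiber hjoin).1 s.2 i⟩
  invFun t := ⟨⋃ i, (t i).1, (maximal_isClique_iff_forall_fiber hjoin).2 fun i => by
    rw [iUnion_inter_preimage_singleton fun j => (t j).2.prop.1]
    exact (t i).2⟩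
  left_inv s := Subtype.ext (by ext v; simp)
  right_inv t := funext fun i =>
    Subtype.ext (iUnion_inter_preimage_singleton (fun j => (t j).2.prop.1) i)

theorem numMaxCliques_eq_prod [Fintype ι] (hjoin : ∀ u v, p u ≠ p v → G.Adj u v) :
    numMaxCliques G = ∏ i, Nat.card {t // G.IsMaxCliqueIn (p ⁻¹' {i}) t} := by
  rw [numMaxCliques_eq_card_maximal, Nat.card_congr (maximalCliquesEquivPi hjoin), Nat.card_pi]

end Join

section Comap

variable {G : SimpleGraph V} (f : W ↪ V)

theorem isClique_comap_iff {s : Set W} : (G.comap f).IsClique s ↔ G.IsClique (f '' s) :=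
  (f.injective.injOn.pairwise_image).symm

theorem maximal_isClique_comap_iff {s : Set W} :
    Maximal (G.comap f).IsClique s ↔ G.IsMaxCliqueIn (range f) (f '' s) := by
  refine ⟨fun hs => ⟨⟨image_subset_range _ _, (isClique_comap_iff f).1 hs.prop⟩,
    fun t ⟨htf, ht⟩ hst => ?_⟩, fun hs => ⟨(isClique_comap_iff f).2 hs.prop.2,
    fun t ht hst => ?_⟩⟩
  · rw [← image_preimage_eq_of_subset htf] at ht ⊢
    exact image_mono (hs.2 ((isClique_comap_iff f).2 ht) (image_subset_iff.1 hst))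
  · exact (image_subset_image_iff f.injective).1 <|
      hs.2 ⟨image_subset_range _ _, (isClique_comap_iff f).1 ht⟩ (image_mono hst)

theorem numMaxCliques_comap :
    numMaxCliques (G.comap f) = Nat.card {t // G.IsMaxCliqueIn (range f) t} := by
  rw [numMaxCliques_eq_card_maximal]
  exact Nat.card_congr
    { toFun := fun s => ⟨f '' s.1, (maximal_isClique_comap_iff f).1 s.2⟩
      invFun := fun t => ⟨f ⁻¹' t.1, (maximal_isClique_comap_iff f).2 <| by
        rw [image_preimage_eq_of_subset t.2.prop.1]; exact t.2⟩
      left_inv := fun s => Subtype.ext (preimage_image_eq _ f.injective)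
      right_inv := fun t => Subtype.ext (image_preimage_eq_of_subset t.2.prop.1) }

end Comap

theorem maximal_isClique_bot_iff [Nonempty W] {s : Set W} :
    Maximal (⊥ : SimpleGraph W).IsClique s ↔ ∃ v, s = {v} := by
  rw [show (⊥ : SimpleGraph W).IsClique = Set.Subsingleton from
    funext fun _ => propext isClique_bot_iff]
  constructor
  · intro hs
    obtain rfl | ⟨v, rfl⟩ := hs.prop.eq_empty_or_singleton
    · obtain ⟨v⟩ := ‹Nonempty W›
      exact absurd (hs.2 subsingleton_singleton (empty_subset _) rfl) (notMem_empty v)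
    · exact ⟨v, rfl⟩
  · rintro ⟨v, rfl⟩
    exact ⟨subsingleton_singleton, fun t ht hvt => (ht.eq_singleton_of_mem (hvt rfl)).le⟩

theorem numMaxCliques_bot [Nonempty W] : numMaxCliques (⊥ : SimpleGraph W) = Nat.card W := by
  rw [numMaxCliques_eq_card_maximal]
  exact Nat.card_congr (Equiv.ofBijective (fun v => ⟨{v}, maximal_isClique_bot_iff.2 ⟨v, rfl⟩⟩)
    ⟨fun u v h => singleton_injective (congrArg Subtype.val h),
      fun s => (maximal_isClique_bot_iff.1 s.2).imp fun v hv => Subtype.ext hv.symm⟩).symm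

section TriangleFree

variable {G : SimpleGraph V}

theorem IsClique.subset_pair_of_cliqueFree_three (h3 : G.CliqueFree 3) {s : Set V}
    (hs : G.IsClique s) {u v : V} (hu : u ∈ s) (hv : v ∈ s) (huv : G.Adj u v) : s ⊆ {u, v} := by
  classical
  intro w hw
  by_contra hw'
  obtain ⟨hwu, hwv⟩ : w ≠ u ∧ w ≠ v := by simpa only [mem_insert_iff, mem_singleton_iff, not_or]
    using hw'
  exact h3 {u, v, w} (is3Clique_triple_iff.2 ⟨huv, hs hu hw hwu.symm, hs hv hw hwv.symm⟩)

theorem maximal_isClique_iff_of_cliqueFree_three [Nonempty V] (h3 : G.CliqueFree 3)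
    (hnbr : ∀ v, ∃ w, G.Adj v w) {s : Set V} :
    Maximal G.IsClique s ↔ ∃ u v, G.Adj u v ∧ s = {u, v} := by
  constructor
  · intro hs
    obtain ⟨u, hu⟩ : s.Nonempty := by
      rw [nonempty_iff_ne_empty]
      rintro rfl
      obtain ⟨v⟩ := ‹Nonempty V›
      exact hs.2 (isClique_singleton v) (empty_subset _) rfl
    by_cases hother : ∃ v ∈ s, v ≠ u
    · obtain ⟨v, hv, hvu⟩ := hother
      have huv := hs.prop hu hv hvu.symm
      exact ⟨u, v, huv,
        (hs.prop.subset_pair_of_cliqueFree_three h3 hu hv huv).antisymm (pair_subset hu hv)⟩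
    · push Not at hother
      obtain ⟨w, huw⟩ := hnbr u
      have hw : w ∈ s := hs.2 (isClique_pair.2 fun _ => huw)
        (fun v hv => mem_insert_iff.2 (Or.inl (hother v hv))) (mem_insert_of_mem u rfl)
      exact absurd (hother w hw) huw.ne'
  · rintro ⟨u, v, huv, rfl⟩
    exact ⟨isClique_pair.2 fun _ => huv,
      fun t ht hst => ht.subset_pair_of_cliqueFree_three h3 (hst (mem_insert u _))
        (hst (mem_insert_of_mem u rfl)) huv⟩

theorem numMaxCliques_eq_card_edgeSet_of_cliqueFree_three [Nonempty V] (h3 : G.CliqueFree 3)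
    (hnbr : ∀ v, ∃ w, G.Adj v w) : numMaxCliques G = Nat.card G.edgeSet := by
  have hpair (u v : V) : {x | x ∈ s(u, v)} = {u, v} := by ext; simp
  rw [numMaxCliques_eq_card_maximal]
  refine (Nat.card_congr (Equiv.ofBijective
    (fun e : G.edgeSet => (⟨{x | x ∈ (e : Sym2 V)}, ?_⟩ : {s // Maximal G.IsClique s}))
    ⟨fun e e' h => Subtype.ext (Sym2.ext fun x => Set.ext_iff.1 (congrArg Subtype.val h) x),
      fun s => ?_⟩)).symm
  · obtain ⟨e, he⟩ := e
    induction e using Sym2.ind with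
    | h u v => exact (maximal_isClique_iff_of_cliqueFree_three h3 hnbr).2 ⟨u, v, he, hpair u v⟩
  · obtain ⟨u, v, huv, hs⟩ := (maximal_isClique_iff_of_cliqueFree_three h3 hnbr).1 s.2
    exact ⟨⟨s(u, v), huv⟩, Subtype.ext ((hpair u v).trans hs.symm)⟩

end TriangleFree

theorem numMaxCliques_cycleGraph_four : numMaxCliques (cycleGraph 4) = 4 := by
  have h3 : (cycleGraph 4).CliqueFree 3 := by
    intro t ht
    obtain ⟨a, b, c, hab, hac, hbc, -⟩ := is3Clique_iff.1 ht
    revert a b c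
    decide
  rw [numMaxCliques_eq_card_edgeSet_of_cliqueFree_three h3 (by decide), Nat.card_eq_fintype_card,
    card_edgeSet]
  decide

end SimpleGraph

namespace Gmm

def partIdx (k : ℕ) (v : Fin (3 * k + 4)) : Fin (k + 1) :=
  ⟨part (3 * k + 4) v, by unfold part; split_ifs <;> omega⟩

theorem adj_of_partIdx_ne {k : ℕ} {u v : Fin (3 * k + 4)} (h : partIdx k u ≠ partIdx k v) :
    (Gmm (3 * k + 4)).Adj u v :=
  ⟨fun huv => h (huv ▸ rfl), Or.inl fun hp => h (Fin.ext hp)⟩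

def base (k : ℕ) : Fin 4 ↪ Fin (3 * k + 4) := Fin.castLEEmb (by omega)

def triple (k : ℕ) (j : Fin k) : Fin 3 ↪ Fin (3 * k + 4) :=
  ⟨fun a => ⟨4 + 3 * j + a, by omega⟩, fun a b h => by simpa [Fin.ext_iff] using h⟩

@[simp]
theorem val_triple (k : ℕ) (j : Fin k) (a : Fin 3) : (triple k j a : ℕ) = 4 + 3 * j + a := rfl

theorem partIdx_preimage_zero (k : ℕ) : partIdx k ⁻¹' {0} = range (base k) := by
  ext v
  simp [base, partIdx, part, Fin.ext_iff]

theorem part_triple (k : ℕ) (j : Fin k) (a : Fin 3) :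
    part (3 * k + 4) (triple k j a) = j + 1 := by
  rw [part, if_neg (by simp only [val_triple]; omega)]
  simp only [val_triple]
  omega

theorem partIdx_preimage_succ (k : ℕ) (j : Fin k) :
    partIdx k ⁻¹' {j.succ} = range (triple k j) := by
  ext v
  refine ⟨fun hv => ?_, ?_⟩
  · replace hv : part (3 * k + 4) v = j + 1 := congrArg Fin.val hv
    rw [part] at hv
    have hv4 : 4 ≤ (v : ℕ) ∧ ((v : ℕ) - 4) / 3 = j := by split_ifs at hv; omega
    exact ⟨⟨(v - 4) % 3, by omega⟩, Fin.ext (by simp only [val_triple]; omega)⟩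
  · rintro ⟨a, rfl⟩
    exact Fin.ext (part_triple k j a)

theorem comap_base (k : ℕ) : (Gmm (3 * k + 4)).comap (base k) = cycleGraph 4 := by
  ext a b
  simp only [base, Fin.coe_castLEEmb, Gmm, ne_eq, Fin.ext_iff, part, cyc4, comap_adj,
    Fin.val_castLE, Fin.is_lt, ↓reduceIte, not_true_eq_false, true_and, false_or, cycleGraph_adj']
  revert a b
  decide

theorem comap_triple (k : ℕ) (j : Fin k) : (Gmm (3 * k + 4)).comap (triple k j) = ⊥ := by
  ext a b
  simp only [comap_adj, bot_adj, iff_false]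
  rintro ⟨-, hpart | ⟨ha, -⟩⟩
  · exact hpart (by rw [part_triple, part_triple])
  · simp only [val_triple] at ha
    omega

theorem numMaxCliques_eq (k : ℕ) : numMaxCliques (Gmm (3 * k + 4)) = 4 * 3 ^ k := by
  rw [numMaxCliques_eq_prod fun _ _ => adj_of_partIdx_ne, Fin.prod_univ_succ,
    partIdx_preimage_zero, ← numMaxCliques_comap, comap_base, numMaxCliques_cycleGraph_four]
  simp_rw [partIdx_preimage_succ, ← numMaxCliques_comap, comap_triple, numMaxCliques_bot,
    Nat.card_fin, Finset.prod_const, Finset.card_univ, Fintype.card_fin]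

end Gmm

theorem stmt_11 (n : ℕ) (h4 : 4 ≤ n) (h3 : n % 3 = 1) :
    numMaxCliques (Gmm n) = 4 * 3 ^ ((n - 4) / 3) := by
  obtain ⟨k, rfl⟩ : ∃ k, n = 3 * k + 4 := ⟨(n - 4) / 3, by omega⟩
  rw [Gmm.numMaxCliques_eq, show (3 * k + 4 - 4) / 3 = k by omega]
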